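/- Let a ≤ b be real numbers and q a real polynomial of odd degree k that is nonnegative on [b, ∞) and nonpositive on (-∞, a]. Then q can be written as a finite positive (nonnegative-coefficient) linear combination of polynomials of the form (x - a)·N(q̃) and (x - b)·N(q̃) with q̃ ∈ ℂ_{(k-1)/2}[x]. -/

import Mathlib

/-!
Every complex root `z` of `q` that is not a point of `[a, b]` can be split off as the real factor
`(X - z)(X - z̄) = N(X - z)`: for non-real `z` this is the conjugate pair, and a real root outside
`[a, b]` is a local extremum of `q`, which has constant sign there, hence a double root. The
quotient still satisfies the sign conditions. Once all roots lie in `[a, b]`,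
`q = c ∏ (X - r_j)` with `c ≥ 0` and an odd number of factors. Writing each `X - r_j` as a convex
combination of `X - a` and `X - b` expands the product into terms `(X - a)^i (X - b)^j` with
`i + j` odd, each of which is `(X - e) N(g)` with `e ∈ {a, b}` and `g` a product of `X - a` and
`X - b`.
-/

open Polynomial Finset

/-- `N(q) = q ⬝ q*`, where `q*` has conjugated coefficients. -/
noncomputable def Nq (q : Polynomial ℂ) : Polynomial ℂ := q * q.map (starRingEnd ℂ)

lemma Nq_one : Nq 1 = 1 := by simp [Nq]

lemma Nq_mul (p q : ℂ[X]) : Nq (p * q) = Nq p * Nq q := by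
  simp only [Nq, Polynomial.map_mul]; ring

lemma Nq_pow (p : ℂ[X]) (n : ℕ) : Nq (p ^ n) = Nq p ^ n := by
  induction n with
  | zero => simp [Nq_one]
  | succ n ih => rw [pow_succ, Nq_mul, ih, pow_succ]

lemma Nq_X_sub_C_ofReal (r : ℝ) : Nq (X - C (r : ℂ)) = (X - C (r : ℂ)) ^ 2 := by
  simp [Nq, Polynomial.map_sub, Complex.conj_ofReal, sq]

/-- The real polynomial `(X - z) (X - z̄)`. -/
noncomputable def conjPairPoly (z : ℂ) : ℝ[X] := X ^ 2 - C (2 * z.re) * X + C (‖z‖ ^ 2)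

lemma map_conjPairPoly (z : ℂ) : (conjPairPoly z).map (algebraMap ℝ ℂ) = Nq (X - C z) := by
  have h₁ : ((2 * z.re : ℝ) : ℂ) = z + (starRingEnd ℂ) z := (Complex.add_conj z).symm
  have h₂ : ((‖z‖ ^ 2 : ℝ) : ℂ) = z * (starRingEnd ℂ) z := by
    push_cast; exact (Complex.mul_conj' z).symm
  simp only [conjPairPoly, Nq, Polynomial.map_add, Polynomial.map_sub, Polynomial.map_mul,
    Polynomial.map_pow, map_X, map_C, Complex.coe_algebraMap, h₁, h₂]
  simp only [map_add, map_mul]; ring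

lemma eval_conjPairPoly (z : ℂ) (x : ℝ) :
    (conjPairPoly z).eval x = (x - z.re) ^ 2 + z.im ^ 2 := by
  simp [conjPairPoly, Complex.sq_norm, Complex.normSq_apply]; ring

lemma natDegree_conjPairPoly (z : ℂ) : (conjPairPoly z).natDegree = 2 := by
  unfold conjPairPoly; compute_degree!

lemma conjPairPoly_ofReal (x : ℝ) : conjPairPoly x = (X - C x) ^ 2 := by
  simp only [conjPairPoly, Complex.ofReal_re, Complex.norm_real, Real.norm_eq_abs, sq_abs,
    map_mul, map_pow, map_ofNat]
  ring

section Hull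

variable {A : Type*} [Semiring A] [Algebra ℝ A]

lemma algebraMap_mul_mem_hull {S : Set A} {p : A} (hp : p ∈ PointedCone.hull ℝ S) {c : ℝ}
    (hc : 0 ≤ c) : algebraMap ℝ A c * p ∈ PointedCone.hull ℝ S := by
  rw [← Algebra.smul_def]
  exact Submodule.smul_mem _ (⟨c, hc⟩ : {c : ℝ // 0 ≤ c}) hp

lemma mul_mem_hull_of_forall_mem {S T : Set A} {h : A}
    (hST : ∀ s ∈ S, h * s ∈ PointedCone.hull ℝ T) {p : A}
    (hp : p ∈ PointedCone.hull ℝ S) : h * p ∈ PointedCone.hull ℝ T := by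
  induction hp using Submodule.span_induction with
  | mem s hs => exact hST s hs
  | zero => simp
  | add x y _ _ hx hy => rw [mul_add]; exact add_mem hx hy
  | smul c x _ hx =>
    rw [← Nonneg.coe_smul, mul_smul_comm, Nonneg.coe_smul]; exact Submodule.smul_mem _ c hx

end Hull

lemma C_ofReal_mul_mem_hull {S : Set ℂ[X]} {p : ℂ[X]} (hp : p ∈ PointedCone.hull ℝ S)
    {c : ℝ} (hc : 0 ≤ c) : C (c : ℂ) * p ∈ PointedCone.hull ℝ S :=
  algebraMap_mul_mem_hull hp hc

noncomputable def endpointNqCone (a b : ℝ) (n : ℕ) : PointedCone ℝ ℂ[X] :=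
  PointedCone.hull ℝ {p | ∃ e : ℝ, (e = a ∨ e = b) ∧
    ∃ r : ℂ[X], r.natDegree ≤ n ∧ p = (X - C (e : ℂ)) * Nq r}

noncomputable def endpointPowCone (a b : ℝ) (l : ℕ) : PointedCone ℝ ℂ[X] :=
  PointedCone.hull ℝ
    {p | ∃ i j : ℕ, i + j = l ∧ p = (X - C (a : ℂ)) ^ i * (X - C (b : ℂ)) ^ j}

section Cones

variable {a b : ℝ}

lemma X_sub_C_mul_Nq_mem_endpointNqCone {e : ℝ} (he : e = a ∨ e = b) {n : ℕ} {r : ℂ[X]}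
    (hr : r.natDegree ≤ n) : (X - C (e : ℂ)) * Nq r ∈ endpointNqCone a b n :=
  PointedCone.subset_hull ⟨e, he, r, hr, rfl⟩

lemma Nq_mul_mem_endpointNqCone {n d : ℕ} {g p : ℂ[X]} (hg : g.natDegree ≤ d)
    (hp : p ∈ endpointNqCone a b n) : Nq g * p ∈ endpointNqCone a b (n + d) := by
  refine mul_mem_hull_of_forall_mem ?_ hp
  rintro _ ⟨e, he, r, hr, rfl⟩
  rw [mul_left_comm, ← Nq_mul]
  exact X_sub_C_mul_Nq_mem_endpointNqCone he (natDegree_mul_le.trans (by omega))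

lemma pow_mul_pow_mem_endpointPowCone {i j l : ℕ} (hij : i + j = l) :
    (X - C (a : ℂ)) ^ i * (X - C (b : ℂ)) ^ j ∈ endpointPowCone a b l :=
  PointedCone.subset_hull ⟨i, j, hij, rfl⟩

lemma endpointPowCone_le_endpointNqCone (n : ℕ) :
    endpointPowCone a b (2 * n + 1) ≤ endpointNqCone a b n := by
  have hNq : ∀ u v : ℕ, Nq ((X - C (a : ℂ)) ^ u * (X - C (b : ℂ)) ^ v) =
      (X - C (a : ℂ)) ^ (2 * u) * (X - C (b : ℂ)) ^ (2 * v) := by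
    intro u v
    rw [Nq_mul, Nq_pow, Nq_pow, Nq_X_sub_C_ofReal, Nq_X_sub_C_ofReal, pow_mul, pow_mul]
  have hdeg : ∀ u v : ℕ,
      ((X - C (a : ℂ)) ^ u * (X - C (b : ℂ)) ^ v).natDegree ≤ u + v := by
    intro u v
    compute_degree
  rw [endpointPowCone, Submodule.span_le]
  rintro _ ⟨i, j, hij, rfl⟩
  rw [SetLike.mem_coe]
  rcases Nat.even_or_odd i with ⟨u, rfl⟩ | ⟨u, rfl⟩
  · obtain ⟨v, rfl⟩ : ∃ v, j = 2 * v + 1 := ⟨n - u, by omega⟩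
    rw [show (X - C (a : ℂ)) ^ (u + u) * (X - C (b : ℂ)) ^ (2 * v + 1) =
      (X - C (b : ℂ)) * Nq ((X - C (a : ℂ)) ^ u * (X - C (b : ℂ)) ^ v) by rw [hNq]; ring]
    exact X_sub_C_mul_Nq_mem_endpointNqCone (Or.inr rfl) ((hdeg u v).trans (by omega))
  · obtain ⟨v, rfl⟩ : ∃ v, j = 2 * v := ⟨n - u, by omega⟩
    rw [show (X - C (a : ℂ)) ^ (2 * u + 1) * (X - C (b : ℂ)) ^ (2 * v) =
      (X - C (a : ℂ)) * Nq ((X - C (a : ℂ)) ^ u * (X - C (b : ℂ)) ^ v) by rw [hNq]; ring]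
    exact X_sub_C_mul_Nq_mem_endpointNqCone (Or.inl rfl) ((hdeg u v).trans (by omega))

lemma X_sub_C_mul_mem_endpointPowCone {r : ℝ} (hr : r ∈ Set.Icc a b) {l : ℕ} {p : ℂ[X]}
    (hp : p ∈ endpointPowCone a b l) : (X - C (r : ℂ)) * p ∈ endpointPowCone a b (l + 1) := by
  obtain ⟨s, t, hs, ht, hst, rfl⟩ : r ∈ segment ℝ a b := by
    rwa [segment_eq_Icc (hr.1.trans hr.2)]
  refine mul_mem_hull_of_forall_mem ?_ hp
  rintro _ ⟨i, j, hij, rfl⟩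
  have hsplit :
      (X - C ((s • a + t • b : ℝ) : ℂ)) * ((X - C (a : ℂ)) ^ i * (X - C (b : ℂ)) ^ j) =
      C (s : ℂ) * ((X - C (a : ℂ)) ^ (i + 1) * (X - C (b : ℂ)) ^ j) +
        C (t : ℂ) * ((X - C (a : ℂ)) ^ i * (X - C (b : ℂ)) ^ (j + 1)) := by
    have hst' : C (s : ℂ) + C (t : ℂ) = 1 := by
      rw [← map_add, ← Complex.ofReal_add, hst, Complex.ofReal_one, map_one]
    simp only [smul_eq_mul, Complex.ofReal_add, Complex.ofReal_mul, map_add, map_mul]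
    linear_combination (-(X * (X - C (a : ℂ)) ^ i * (X - C (b : ℂ)) ^ j)) * hst'
  rw [hsplit]
  exact add_mem (C_ofReal_mul_mem_hull (pow_mul_pow_mem_endpointPowCone (by omega)) hs)
    (C_ofReal_mul_mem_hull (pow_mul_pow_mem_endpointPowCone (by omega)) ht)

lemma prod_X_sub_C_mem_endpointPowCone {s : Multiset ℂ}
    (hs : ∀ z ∈ s, ∃ r ∈ Set.Icc a b, (r : ℂ) = z) :
    (s.map fun z => X - C z).prod ∈ endpointPowCone a b (Multiset.card s) := by
  induction s using Multiset.induction_on with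
  | empty => simpa using pow_mul_pow_mem_endpointPowCone (a := a) (b := b) (add_zero 0)
  | cons z s ih =>
    obtain ⟨r, hr, rfl⟩ := hs z (Multiset.mem_cons_self z s)
    rw [Multiset.map_cons, Multiset.prod_cons, Multiset.card_cons]
    exact X_sub_C_mul_mem_endpointPowCone hr (ih fun w hw => hs w (Multiset.mem_cons_of_mem hw))

end Cones

section SignConditions

variable {Q r : ℝ[X]} {x₀ : ℝ}

lemma eval_nonneg_Ici_of_mul (hQ : ∀ x ≠ x₀, 0 < Q.eval x) {b : ℝ}
    (h : ∀ x, b ≤ x → 0 ≤ (Q * r).eval x) : ∀ x, b ≤ x → 0 ≤ r.eval x := by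
  have off : ∀ x, b ≤ x → x ≠ x₀ → 0 ≤ r.eval x := fun x hb hx =>
    nonneg_of_mul_nonneg_right (eval_mul (p := Q) ▸ h x hb) (hQ x hx)
  intro x hx
  by_cases hx₀ : x = x₀
  · exact ge_of_tendsto (r.continuousAt.tendsto.mono_left nhdsWithin_le_nhds)
      (eventually_nhdsWithin_of_forall (s := Set.Ioi x) fun y hy =>
        off y (hx.trans (le_of_lt hy)) (hx₀ ▸ ne_of_gt hy))
  · exact off x hx hx₀

lemma eval_nonpos_Iic_of_mul (hQ : ∀ x ≠ x₀, 0 < Q.eval x) {a : ℝ}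
    (h : ∀ x, x ≤ a → (Q * r).eval x ≤ 0) : ∀ x, x ≤ a → r.eval x ≤ 0 := by
  have off : ∀ x, x ≤ a → x ≠ x₀ → r.eval x ≤ 0 := fun x ha hx =>
    nonpos_of_mul_nonpos_right (eval_mul (p := Q) ▸ h x ha) (hQ x hx)
  intro x hx
  by_cases hx₀ : x = x₀
  · exact le_of_tendsto (r.continuousAt.tendsto.mono_left nhdsWithin_le_nhds)
      (eventually_nhdsWithin_of_forall (s := Set.Iio x) fun y (hy : y < x) =>
        off y (hy.le.trans hx) (hx₀ ▸ ne_of_lt hy))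
  · exact off x hx hx₀

end SignConditions

lemma X_sub_C_sq_dvd_of_isLocalExtr {p : ℝ[X]} {x : ℝ} (hroot : p.IsRoot x)
    (hextr : IsLocalExtr (fun y => p.eval y) x) : (X - C x) ^ 2 ∣ p := by
  rcases eq_or_ne p 0 with rfl | hp
  · exact dvd_zero _
  have hder : p.derivative.IsRoot x := by
    rw [IsRoot, ← Polynomial.deriv]; exact hextr.deriv_eq_zero
  exact (pow_dvd_pow _ ((one_lt_rootMultiplicity_iff_isRoot hp).2 ⟨hroot, hder⟩)).trans
    (p.pow_rootMultiplicity_dvd x)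

lemma aeval_ofReal_eq_zero_iff {q : ℝ[X]} {x : ℝ} : aeval (x : ℂ) q = 0 ↔ q.IsRoot x := by
  rw [← Complex.coe_algebraMap, aeval_algebraMap_apply_eq_algebraMap_eval, Complex.coe_algebraMap,
    Complex.ofReal_eq_zero, IsRoot]

section SignedOutsideIcc

variable {a b : ℝ} {q : ℝ[X]}

lemma conjPairPoly_dvd_of_aeval_eq_zero (hpos : ∀ x, b ≤ x → 0 ≤ q.eval x)
    (hneg : ∀ x, x ≤ a → q.eval x ≤ 0) {z : ℂ} (hz : aeval z q = 0)
    (hzIcc : ∀ r ∈ Set.Icc a b, (r : ℂ) ≠ z) : conjPairPoly z ∣ q := by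
  by_cases him : z.im = 0
  · obtain ⟨x, rfl⟩ : ∃ x : ℝ, (x : ℂ) = z := ⟨z.re, Complex.ext rfl him.symm⟩
    have hroot : q.IsRoot x := aeval_ofReal_eq_zero_iff.1 hz
    rw [conjPairPoly_ofReal]
    refine X_sub_C_sq_dvd_of_isLocalExtr hroot ?_
    rcases not_and_or.1 fun h => hzIcc x h rfl with hxa | hbx
    · exact .inr <| Filter.mem_of_superset (Iic_mem_nhds (not_le.1 hxa)) fun y hy =>
        (hroot.eq_zero ▸ hneg y hy : q.eval y ≤ q.eval x)
    · exact .inl <| Filter.mem_of_superset (Ici_mem_nhds (not_le.1 hbx)) fun y hy =>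
        (hroot.eq_zero ▸ hpos y hy : q.eval x ≤ q.eval y)
  · exact q.quadratic_dvd_of_aeval_eq_zero_im_ne_zero hz him

lemma exists_conjPairPoly_mul (hpos : ∀ x, b ≤ x → 0 ≤ q.eval x)
    (hneg : ∀ x, x ≤ a → q.eval x ≤ 0) {z : ℂ} (hz : aeval z q = 0)
    (hzIcc : ∀ r ∈ Set.Icc a b, (r : ℂ) ≠ z) :
    ∃ q', q = conjPairPoly z * q' ∧ (∀ x, b ≤ x → 0 ≤ q'.eval x) ∧
      (∀ x, x ≤ a → q'.eval x ≤ 0) := by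
  obtain ⟨q', rfl⟩ := conjPairPoly_dvd_of_aeval_eq_zero hpos hneg hz hzIcc
  have hQ : ∀ x ≠ z.re, 0 < (conjPairPoly z).eval x := fun x hx => by
    rw [eval_conjPairPoly]; have := sub_ne_zero.2 hx; positivity
  exact ⟨q', rfl, eval_nonneg_Ici_of_mul hQ hpos, eval_nonpos_Iic_of_mul hQ hneg⟩

lemma map_mem_endpointNqCone_of_aroots_mem_Icc {n : ℕ} (hq : q.natDegree = 2 * n + 1)
    (hpos : ∀ x, b ≤ x → 0 ≤ q.eval x)
    (hroots : ∀ z ∈ q.aroots ℂ, ∃ r ∈ Set.Icc a b, (r : ℂ) = z) :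
    q.map (algebraMap ℝ ℂ) ∈ endpointNqCone a b n := by
  have hq0 : q ≠ 0 := by rintro rfl; simp at hq
  have hlc : 0 ≤ q.leadingCoeff := by
    by_contra! hlc
    refine (hpos (b + 1) (by linarith)).not_gt
      (eval_lt_zero_of_roots_lt_of_leadingCoeff_nonpos (fun y hy => ?_) hlc.le)
    obtain ⟨r, hr, hry⟩ := hroots y (mem_aroots.2 ⟨hq0, aeval_ofReal_eq_zero_iff.2 hy⟩)
    linarith [hr.2, Complex.ofReal_injective hry]
  have hsplit := C_leadingCoeff_mul_prod_multiset_X_sub_C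
    (IsAlgClosed.card_roots_eq_natDegree (p := q.map (algebraMap ℝ ℂ)))
  rw [leadingCoeff_map, Complex.coe_algebraMap] at hsplit
  have hcard : Multiset.card (q.aroots ℂ) = 2 * n + 1 := by
    rw [aroots, IsAlgClosed.card_roots_eq_natDegree, natDegree_map, hq]
  rw [← hsplit]
  exact C_ofReal_mul_mem_hull (endpointPowCone_le_endpointNqCone n
    (hcard ▸ prod_X_sub_C_mem_endpointPowCone hroots)) hlc

theorem map_mem_endpointNqCone (n : ℕ) (q : ℝ[X]) (hq : q.natDegree = 2 * n + 1)
    (hpos : ∀ x, b ≤ x → 0 ≤ q.eval x) (hneg : ∀ x, x ≤ a → q.eval x ≤ 0) :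
    q.map (algebraMap ℝ ℂ) ∈ endpointNqCone a b n := by
  induction n using Nat.strong_induction_on generalizing q with
  | _ n ih =>
    by_cases hroots : ∀ z ∈ q.aroots ℂ, ∃ r ∈ Set.Icc a b, (r : ℂ) = z
    · exact map_mem_endpointNqCone_of_aroots_mem_Icc hq hpos hroots
    push Not at hroots
    obtain ⟨z, hz, hzIcc⟩ := hroots
    obtain ⟨q', rfl, hpos', hneg'⟩ :=
      exists_conjPairPoly_mul hpos hneg (mem_aroots.1 hz).2 hzIcc
    have hq' : q' ≠ 0 := by rintro rfl; simp at hq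
    have hQ : conjPairPoly z ≠ 0 := by
      intro h; simpa [h] using natDegree_conjPairPoly z
    rw [natDegree_mul hQ hq', natDegree_conjPairPoly] at hq
    obtain ⟨m, rfl⟩ : ∃ m, n = m + 1 := ⟨n - 1, by omega⟩
    rw [Polynomial.map_mul, map_conjPairPoly]
    exact Nq_mul_mem_endpointNqCone (natDegree_X_sub_C_le z)
      (ih m (by omega) q' (by omega) hpos' hneg')

end SignedOutsideIcc

lemma exists_sum_of_mem_endpointNqCone {a b : ℝ} {n : ℕ} {p : ℂ[X]}
    (hp : p ∈ endpointNqCone a b n) :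
    ∃ (m : ℕ) (t : Fin m → ℝ) (e : Fin m → ℝ) (r : Fin m → ℂ[X]),
      (∀ i, 0 ≤ t i) ∧ (∀ i, e i = a ∨ e i = b) ∧ (∀ i, (r i).natDegree ≤ n) ∧
      p = ∑ i, C ((t i : ℝ) : ℂ) * (X - C ((e i : ℝ) : ℂ)) * Nq (r i) := by
  obtain ⟨m, t, g, rfl⟩ := Submodule.mem_span_set'.1 hp
  choose e he r hr hg using fun i => (g i).2
  refine ⟨m, fun i => t i, e, r, fun i => (t i).2, he, hr, Finset.sum_congr rfl fun i _ => ?_⟩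
  rw [hg i, ← Nonneg.coe_smul, Algebra.smul_def, Polynomial.algebraMap_apply, Complex.coe_algebraMap,
    mul_assoc]

theorem odd_degree_poly_decomposition_general (a b : ℝ)
    (q : Polynomial ℝ) (k : ℕ) (hk : q.natDegree = k) (hodd : Odd k)
    (hpos : ∀ x : ℝ, b ≤ x → 0 ≤ q.eval x) (hneg : ∀ x : ℝ, x ≤ a → q.eval x ≤ 0) :
    ∃ (m : ℕ) (t : Fin m → ℝ) (e : Fin m → ℝ) (r : Fin m → Polynomial ℂ),
      (∀ i, 0 ≤ t i) ∧ (∀ i, e i = a ∨ e i = b) ∧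
      (∀ i, (r i).natDegree ≤ (k - 1) / 2) ∧
      q.map (algebraMap ℝ ℂ) =
        ∑ i, Polynomial.C ((t i : ℝ) : ℂ) * (X - Polynomial.C ((e i : ℝ) : ℂ)) * Nq (r i) := by
  obtain ⟨n, rfl⟩ := hodd
  rw [show (2 * n + 1 - 1) / 2 = n by omega]
  exact exists_sum_of_mem_endpointNqCone (map_mem_endpointNqCone n q hk hpos hneg)

theorem odd_degree_poly_decomposition (a b : ℝ) (hab : a ≤ b)
    (q : Polynomial ℝ) (k : ℕ) (hk : q.natDegree = k) (hodd : Odd k)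
    (hpos : ∀ x : ℝ, b ≤ x → 0 ≤ q.eval x) (hneg : ∀ x : ℝ, x ≤ a → q.eval x ≤ 0) :
    ∃ (m : ℕ) (t : Fin m → ℝ) (e : Fin m → ℝ) (r : Fin m → Polynomial ℂ),
      (∀ i, 0 ≤ t i) ∧ (∀ i, e i = a ∨ e i = b) ∧
      (∀ i, (r i).natDegree ≤ (k - 1) / 2) ∧
      q.map (algebraMap ℝ ℂ) =
        ∑ i, Polynomial.C ((t i : ℝ) : ℂ) * (X - Polynomial.C ((e i : ℝ) : ℂ)) * Nq (r i) :=
  odd_degree_poly_decomposition_general a b q k hk hodd hpos hneg
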